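/- (Second hypergeometric representation, q(G) = G.) Assume none of α_1,…,α_d is a negative integer (so (α_k+1)_s ≠ 0 for all s). Let P_n = Σ_{j=0}^n G^j(x^n)/j!. Then for every n ≥ 0, P_n(x) = ρ^n · [∏_{k=1}^d (α_k+1)_n] · Σ_{s=0}^n [(−n)_s / (s! · ∏_{k=1}^d (α_k+1)_s)] · (−x/ρ)^s; i.e., P_n(x) = ρ^n ∏_k (α_k+1)_n · 1Fd(−n; α_1+1,…,α_d+1; −x/ρ). -/

import Mathlib

open Polynomial

/-- Pochhammer symbol `(a)_j = a(a+1)⋯(a+j−1)`. -/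
noncomputable def poch (a : ℂ) (j : ℕ) : ℂ := ∏ s ∈ Finset.range j, (a + s)

/-- The derivative operator `∂` on `ℂ[x]`. -/
noncomputable def Dop : Module.End ℂ (Polynomial ℂ) := Polynomial.derivative

/-- Multiplication by `x` on `ℂ[x]`. -/
noncomputable def Xop : Module.End ℂ (Polynomial ℂ) := LinearMap.mulLeft ℂ Polynomial.X

/-- `H = x∂`. -/
noncomputable def Hop : Module.End ℂ (Polynomial ℂ) := Xop * Dop

/-- `G = R(H)∘∂` with `R(H) = ρ·∏_{k=1}^d (H + α_k + 1)`. -/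
noncomputable def Gop (d : ℕ) (α : ℕ → ℂ) (ρ : ℂ) : Module.End ℂ (Polynomial ℂ) :=
  (Polynomial.aeval Hop
    (Polynomial.C ρ * ∏ k ∈ Finset.range d, (Polynomial.X + Polynomial.C (α k + 1)))) * Dop

/-!
Every monomial `X ^ m` is an eigenvector of `H = x∂` with eigenvalue `m`, so `R(H)` acts on it by
the scalar `R(m)` and `G` is a weighted backward shift:
`G (X ^ (m + 1)) = ρ (m + 1) ∏ₖ (αₖ + 1 + m) • X ^ m`. Iterating,
`G ^ j (X ^ (s + j)) = ρ ^ j ((s + j)! / s!) ∏ₖ (αₖ + 1 + s)_j • X ^ s`, and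
`(αₖ + 1)_(s + j) = (αₖ + 1)_s (αₖ + 1 + s)_j`, `(-n)_s = (-1) ^ s n! / (n - s)!` turn the
coefficient of `X ^ s` in `P_n` into the hypergeometric one.
-/

lemma poch_add (a : ℂ) (m n : ℕ) : poch a (m + n) = poch a m * poch (a + m) n := by
  simp only [poch, Finset.prod_range_add, Nat.cast_add, add_assoc]

lemma poch_succ (a : ℂ) (n : ℕ) : poch a (n + 1) = poch a n * (a + n) :=
  Finset.prod_range_succ _ n

lemma poch_neg_natCast (n s : ℕ) : poch (-(n : ℂ)) s = (-1) ^ s * n.descFactorial s := by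
  calc poch (-(n : ℂ)) s = ∏ i ∈ Finset.range s, (-1) * ((n : ℂ) - i) :=
        Finset.prod_congr rfl fun i _ => by ring
    _ = (-1) ^ s * (descPochhammer ℂ s).eval (n : ℂ) := by
        rw [Finset.prod_mul_distrib, Finset.prod_const, Finset.card_range,
          descPochhammer_eval_eq_prod_range]
    _ = (-1) ^ s * n.descFactorial s := by rw [descPochhammer_eval_eq_descFactorial]

lemma poch_add_one_ne_zero {a : ℂ} (ha : ∀ s : ℕ, a ≠ -((s : ℂ) + 1)) (t : ℕ) :
    poch (a + 1) t ≠ 0 :=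
  Finset.prod_ne_zero_iff.mpr fun s _ h => ha s (by linear_combination h)

lemma Hop_X_pow (m : ℕ) : Hop (X ^ m : ℂ[X]) = (m : ℂ) • X ^ m := by
  rcases m with _ | m
  · simp [Hop, Xop, Dop]
  · simp only [Hop, Module.End.mul_apply, Dop, Xop, LinearMap.mulLeft_apply,
      derivative_X_pow, smul_eq_C_mul]
    push_cast
    ring

lemma hasEigenvector_Hop_X_pow (m : ℕ) : Hop.HasEigenvector (m : ℂ) (X ^ m : ℂ[X]) :=
  Module.End.hasEigenvector_iff.mpr
    ⟨Module.End.mem_eigenspace_iff.mpr (Hop_X_pow m), pow_ne_zero m X_ne_zero⟩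

lemma Gop_X_pow_succ (d : ℕ) (α : ℕ → ℂ) (ρ : ℂ) (m : ℕ) :
    Gop d α ρ (X ^ (m + 1) : ℂ[X])
      = (ρ * (m + 1 : ℂ) * ∏ k ∈ Finset.range d, (α k + 1 + m)) • X ^ m := by
  have hD : Dop (X ^ (m + 1) : ℂ[X]) = (m + 1 : ℂ) • X ^ m := by
    simp [Dop, smul_eq_C_mul]
  rw [Gop, Module.End.mul_apply, hD, map_smul,
    Module.End.aeval_apply_of_hasEigenvector (hasEigenvector_Hop_X_pow m), smul_smul]
  simp only [eval_mul, eval_C, eval_prod, eval_add, eval_X]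
  congr 1
  rw [Finset.prod_congr rfl fun k _ => add_comm (m : ℂ) (α k + 1)]
  ring

lemma Gop_pow_X_pow_add (d : ℕ) (α : ℕ → ℂ) (ρ : ℂ) (s j : ℕ) :
    (Gop d α ρ ^ j) (X ^ (s + j) : ℂ[X])
      = (ρ ^ j * (s + j).descFactorial j * ∏ k ∈ Finset.range d, poch (α k + 1 + s) j) •
          X ^ s := by
  induction j with
  | zero => simp [poch]
  | succ j ih =>
    rw [pow_succ, Module.End.mul_apply, ← add_assoc, Gop_X_pow_succ, map_smul, ih, smul_smul,
      Nat.succ_descFactorial_succ]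
    simp only [poch_succ, Finset.prod_mul_distrib]
    push_cast
    simp only [← add_assoc]
    congr 1
    ring

/-- Second hypergeometric representation for `q(G) = G` (no `α_k` a negative integer):
`P_n = ρ^n ∏_k (α_k+1)_n · Σ_{s=0}^n [(−n)_s / (s! ∏_k (α_k+1)_s)] (−x/ρ)^s`. -/
theorem stmt10 (d : ℕ) (α : ℕ → ℂ) (ρ : ℂ) (hρ : ρ ≠ 0)
    (hα : ∀ k ∈ Finset.range d, ∀ s : ℕ, α k ≠ -((s : ℂ) + 1)) (n : ℕ) :
    (∑ j ∈ Finset.range (n + 1),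
        ((j.factorial : ℂ))⁻¹ • ((Gop d α ρ) ^ j) (Polynomial.X ^ n))
      = (ρ ^ n * ∏ k ∈ Finset.range d, poch (α k + 1) n) •
          ∑ s ∈ Finset.range (n + 1),
            (poch (-(n : ℂ)) s
                / ((s.factorial : ℂ) * ∏ k ∈ Finset.range d, poch (α k + 1) s))
              • ((-ρ⁻¹) ^ s • Polynomial.X ^ s) := by
  rw [Finset.smul_sum, ← Finset.sum_range_reflect]
  refine Finset.sum_congr rfl fun s hs => ?_
  obtain ⟨j, rfl⟩ := Nat.exists_eq_add_of_le (Finset.mem_range_succ_iff.mp hs)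
  have hpoch : ∏ k ∈ Finset.range d, poch (α k + 1) s ≠ 0 :=
    Finset.prod_ne_zero_iff.mpr fun k hk => poch_add_one_ne_zero (hα k hk) s
  have hfact : ((s + j).descFactorial j * s.factorial : ℂ)
      = (s + j).descFactorial s * j.factorial := by
    have h₁ := Nat.factorial_mul_descFactorial (Nat.le_add_left j s)
    have h₂ := Nat.factorial_mul_descFactorial (Nat.le_add_right s j)
    simp only [Nat.add_sub_cancel, Nat.add_sub_cancel_left] at h₁ h₂
    exact_mod_cast by linarith
  rw [show s + j + 1 - 1 - s = j by omega, Gop_pow_X_pow_add, smul_smul, smul_smul, smul_smul,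
    poch_neg_natCast, Finset.prod_congr rfl fun k _ => poch_add (α k + 1) s j,
    Finset.prod_mul_distrib]
  congr 1
  have hsign : ((-1 : ℂ) ^ s) ^ 2 = 1 := by rw [← pow_mul, mul_comm, pow_mul]; norm_num
  rw [neg_pow ρ⁻¹, inv_pow, pow_add]
  field_simp
  rw [hsign, mul_one, div_eq_div_iff (Nat.cast_ne_zero.mpr j.factorial_ne_zero)
    (Nat.cast_ne_zero.mpr s.factorial_ne_zero)]
  linear_combination (∏ k ∈ Finset.range d, poch (α k + 1 + s) j) * hfact
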